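/- Let f : [0,∞) → ℝ be continuous with liminf_{s→∞}(−f(s)·ln(s)/s²) = μ ∈ (0,∞], and let ε > 0. Then A_ε := sup{ f(s) + s + (2/(3·√(3ε)))·s^{3/2} : s > 0 } is finite. -/

import Mathlib

/-! Since the liminf is positive, eventually `-f s ≥ c s² / log s` for some `c > 0`, which
dominates `s + C s^{3/2}`; so the continuous function `f s + s + C s^{3/2}` is eventually
negative, and it is bounded on the remaining compact interval. -/

open Filter Real Asymptotics Set

lemma isLittleO_rpow_mul_log_sq {p : ℝ} (hp : p < 2) :
    (fun s : ℝ => s ^ p * log s) =o[atTop] fun s => s ^ 2 := by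
  refine ((isBigO_refl (fun s : ℝ => s ^ p) atTop).mul_isLittleO
    (isLittleO_log_rpow_atTop (sub_pos.2 hp))).trans_eventuallyEq ?_
  filter_upwards [eventually_gt_atTop 0] with s hs
  rw [← rpow_add hs, add_sub_cancel, rpow_two]

/-- Dividing `-f s * log s > c * s ^ 2 > g s * log s` by `log s > 0`. -/
lemma eventually_le_neg_of_liminf_pos {f g : ℝ → ℝ}
    (hliminf : 0 < liminf (fun s : ℝ => ((-f s * log s / s ^ 2 : ℝ) : EReal)) atTop)
    (hg : (fun s => g s * log s) =o[atTop] fun s => s ^ 2) :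
    ∀ᶠ s in atTop, g s ≤ -f s := by
  obtain ⟨c, hc0, hc⟩ := EReal.exists_between_coe_real hliminf
  have hc0 : (0 : ℝ) < c := mod_cast hc0
  filter_upwards [eventually_lt_of_lt_liminf hc, hg.def hc0, eventually_gt_atTop 1]
    with s hf hg hs
  have hlog : 0 < log s := log_pos hs
  have hf : c * s ^ 2 < -f s * log s := (lt_div_iff₀ (by positivity)).mp (mod_cast hf)
  have hg : g s * log s ≤ c * s ^ 2 := by
    simpa [abs_of_pos (by positivity : 0 < s ^ 2)] using (le_abs_self _).trans hg
  exact le_of_mul_le_mul_right (hg.trans hf.le) hlog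

lemma ContinuousOn.bddAbove_image_Ici_of_eventually_le {h : ℝ → ℝ} {a M : ℝ}
    (hh : ContinuousOn h (Ici a)) (hM : ∀ᶠ s in atTop, h s ≤ M) : BddAbove (h '' Ici a) := by
  obtain ⟨S, hS⟩ := hM.exists_forall_of_atTop
  obtain ⟨B, hB⟩ := (isCompact_Icc (a := a) (b := S)).bddAbove_image
    (hh.mono Icc_subset_Ici_self)
  refine ⟨max B M, forall_mem_image.2 fun s hs => ?_⟩
  rcases le_total s S with hsS | hSs
  · exact le_max_of_le_left (hB (mem_image_of_mem h ⟨hs, hsS⟩))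
  · exact le_max_of_le_right (hS s hSs)

theorem stmt_7_general (f : ℝ → ℝ) (hf : ContinuousOn f (Set.Ici 0)) (μ : EReal) (hμ : 0 < μ)
    (hliminf : Filter.liminf (fun s : ℝ => ((-f s * Real.log s / s ^ 2 : ℝ) : EReal))
      Filter.atTop = μ)
    (ε : ℝ) :
    ∃ A : ℝ, ∀ s : ℝ, 0 < s →
      f s + s + (2 / (3 * Real.sqrt (3 * ε))) * s ^ ((3 : ℝ) / 2) ≤ A := by
  set C := 2 / (3 * √(3 * ε))
  have hg : (fun s : ℝ => (s + C * s ^ ((3 : ℝ) / 2)) * log s) =o[atTop] fun s => s ^ 2 := by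
    refine ((isLittleO_rpow_mul_log_sq one_lt_two).add
      ((isLittleO_rpow_mul_log_sq (p := 3 / 2) (by norm_num)).const_mul_left C)).congr' ?_ .rfl
    filter_upwards with s
    rw [rpow_one]
    ring
  have hev := eventually_le_neg_of_liminf_pos (hliminf ▸ hμ) hg
  have hcont : ContinuousOn (fun s => f s + s + C * s ^ ((3 : ℝ) / 2)) (Ici 0) :=
    (hf.add continuousOn_id).add
      (continuousOn_const.mul (continuousOn_id.rpow_const fun _ _ => by norm_num))
  obtain ⟨A, hA⟩ := hcont.bddAbove_image_Ici_of_eventually_le (M := 0)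
    (hev.mono fun s hs => by linarith)
  exact ⟨A, fun s hs => hA (mem_image_of_mem _ hs.le)⟩

theorem stmt_7 (f : ℝ → ℝ) (hf : ContinuousOn f (Set.Ici 0)) (μ : EReal) (hμ : 0 < μ)
    (hliminf : Filter.liminf (fun s : ℝ => ((-f s * Real.log s / s ^ 2 : ℝ) : EReal))
      Filter.atTop = μ)
    (ε : ℝ) (hε : 0 < ε) :
    ∃ A : ℝ, ∀ s : ℝ, 0 < s →
      f s + s + (2 / (3 * Real.sqrt (3 * ε))) * s ^ ((3 : ℝ) / 2) ≤ A :=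
  stmt_7_general f hf μ hμ hliminf ε
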